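/- arXiv:2406.17125 — 3 statements merged into one kernel-verified Lean document; each statement's English description precedes it below -/
import Mathlib

section
/- Let ρ_t(x,y) = (ψ * φ_t^d)(x) · φ_t^{D-d}(y) on ℝ^d × ℝ^{D-d}, where ψ : ℝ^d → ℝ is bounded and continuous. Then for all t > 0 and (x,y), Δρ_t(x,y) = (‖y‖²/t² + (d−D)/t)·ρ_t(x,y) + φ_t^{D-d}(y) · Δ_x(ψ * φ_t^d)(x), where Δ = Δ_x + Δ_y is the Laplacian on ℝ^D. -/
open MeasureTheory Real Filter Set Topology

/-- Density of the centered Gaussian on `ℝ^n` with covariance `t • I`. -/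
noncomputable def gauss (n : ℕ) (t : ℝ) (x : EuclideanSpace ℝ (Fin n)) : ℝ :=
  (2 * π * t) ^ (-(n : ℝ) / 2) * Real.exp (-‖x‖ ^ 2 / (2 * t))

/-- One-dimensional centered Gaussian density with variance `t`. -/
noncomputable def gauss1 (t u : ℝ) : ℝ :=
  (2 * π * t) ^ (-(1 : ℝ) / 2) * Real.exp (-u ^ 2 / (2 * t))

/-- Euclidean Laplacian: sum of second derivatives along coordinate directions. -/
noncomputable def laplacian {n : ℕ} (f : EuclideanSpace ℝ (Fin n) → ℝ)
    (x : EuclideanSpace ℝ (Fin n)) : ℝ :=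
  ∑ i : Fin n, iteratedDeriv 2 (fun s : ℝ => f (x + s • EuclideanSpace.single i 1)) 0

/-- Convolution of two functions on `ℝ^n`. -/
noncomputable def conv' {n : ℕ} (f g : EuclideanSpace ℝ (Fin n) → ℝ)
    (x : EuclideanSpace ℝ (Fin n)) : ℝ :=
  ∫ y, f y * g (x - y)

/-- Convolution of two functions on `ℝ`. -/
noncomputable def conv1 (f g : ℝ → ℝ) (x : ℝ) : ℝ :=
  ∫ y, f y * g (x - y)

/-!
The Laplacian of `ρ_t` splits into its `x`-part and its `y`-part. In each part the other
factor is a constant, and a constant factor commutes with `iteratedDeriv` unconditionally.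
What is left is the Gaussian identity `Δ φ_t^n(y) = (‖y‖²/t² - n/t) φ_t^n(y)`: along a
coordinate line, `s ↦ φ_t^n(y + s eᵢ)` is a constant times the exponential of a quadratic
in `s`, whose second derivative at `0` is explicit.
-/

lemma laplacian_const_mul {n : ℕ} (c : ℝ) (f : EuclideanSpace ℝ (Fin n) → ℝ)
    (x : EuclideanSpace ℝ (Fin n)) :
    laplacian (fun x' => c * f x') x = c * laplacian f x := by
  simp only [laplacian, iteratedDeriv_const_mul_field, Finset.mul_sum]

lemma laplacian_mul_const {n : ℕ} (f : EuclideanSpace ℝ (Fin n) → ℝ) (c : ℝ)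
    (x : EuclideanSpace ℝ (Fin n)) :
    laplacian (fun x' => f x' * c) x = laplacian f x * c := by
  simp only [laplacian, iteratedDeriv_mul_const_field, Finset.sum_mul]

lemma iteratedDeriv_two_exp_quadratic (B b c : ℝ) :
    iteratedDeriv 2 (fun s : ℝ => exp (B + b * s + c * s ^ 2)) 0 = (b ^ 2 + 2 * c) * exp B := by
  have hquad (s : ℝ) : HasDerivAt (fun s : ℝ => B + b * s + c * s ^ 2) (b + 2 * c * s) s :=
    (((hasDerivAt_id s).const_mul b).const_add B |>.add
      ((hasDerivAt_pow 2 s).const_mul c)).congr_deriv (by norm_num; ring)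
  have hderiv : deriv (fun s : ℝ => exp (B + b * s + c * s ^ 2))
      = fun s => (b + 2 * c * s) * exp (B + b * s + c * s ^ 2) :=
    funext fun s => ((hquad s).exp.congr_deriv (mul_comm _ _)).deriv
  have hlin : HasDerivAt (fun s : ℝ => b + 2 * c * s) (2 * c) 0 := by
    simpa using ((hasDerivAt_id (0 : ℝ)).const_mul (2 * c)).const_add b
  rw [iteratedDeriv_succ, iteratedDeriv_one, hderiv, (hlin.fun_mul (hquad 0).exp).deriv]
  simp only [mul_zero, add_zero, zero_pow two_ne_zero]
  ring

lemma norm_add_smul_single_sq {n : ℕ} (y : EuclideanSpace ℝ (Fin n)) (i : Fin n) (s : ℝ) :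
    ‖y + s • EuclideanSpace.single i (1 : ℝ)‖ ^ 2 = ‖y‖ ^ 2 + 2 * y i * s + s ^ 2 := by
  rw [norm_add_sq_real, real_inner_smul_right, EuclideanSpace.inner_single_right, norm_smul,
    PiLp.norm_single]
  simp only [norm_one, mul_one, Real.norm_eq_abs, sq_abs, conj_trivial, one_mul]
  ring

lemma gauss_add_smul_single {n : ℕ} {t : ℝ} (ht : t ≠ 0) (y : EuclideanSpace ℝ (Fin n))
    (i : Fin n) (s : ℝ) :
    gauss n t (y + s • EuclideanSpace.single i 1)
      = (2 * π * t) ^ (-(n : ℝ) / 2) *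
          exp (-‖y‖ ^ 2 / (2 * t) + -(y i / t) * s + -(1 / (2 * t)) * s ^ 2) := by
  rw [gauss, norm_add_smul_single_sq]
  congr 2
  field_simp
  ring

lemma laplacian_gauss (n : ℕ) {t : ℝ} (ht : t ≠ 0) (y : EuclideanSpace ℝ (Fin n)) :
    laplacian (gauss n t) y = (‖y‖ ^ 2 / t ^ 2 - n / t) * gauss n t y := by
  have hcoord (i : Fin n) :
      iteratedDeriv 2 (fun s : ℝ => gauss n t (y + s • EuclideanSpace.single i 1)) 0
        = (y i ^ 2 / t ^ 2 - 1 / t) * gauss n t y := by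
    simp_rw [gauss_add_smul_single ht]
    rw [iteratedDeriv_const_mul_field, iteratedDeriv_two_exp_quadratic, gauss]
    field_simp
    ring
  have hnorm : ‖y‖ ^ 2 = ∑ i, y i ^ 2 := by
    simp [EuclideanSpace.norm_eq, Real.sq_sqrt (Finset.sum_nonneg fun i _ => sq_nonneg (y i))]
  simp only [laplacian, hcoord, ← Finset.sum_mul, Finset.sum_sub_distrib, ← Finset.sum_div,
    ← hnorm, Finset.sum_const, Finset.card_univ, Fintype.card_fin, nsmul_eq_mul, mul_one]

theorem laplacian_diffused_density_general (d D : ℕ) (hdD : d < D)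
    (ψ : EuclideanSpace ℝ (Fin d) → ℝ) (t : ℝ) (ht : 0 < t)
    (x : EuclideanSpace ℝ (Fin d)) (y : EuclideanSpace ℝ (Fin (D - d))) :
    laplacian (fun x' => conv' ψ (gauss d t) x' * gauss (D - d) t y) x
      + laplacian (fun y' => conv' ψ (gauss d t) x * gauss (D - d) t y') y
    = (‖y‖ ^ 2 / t ^ 2 + ((d : ℝ) - D) / t) * (conv' ψ (gauss d t) x * gauss (D - d) t y)
      + gauss (D - d) t y * laplacian (conv' ψ (gauss d t)) x := by
  rw [laplacian_mul_const, laplacian_const_mul, laplacian_gauss _ ht.ne', Nat.cast_sub hdD.le]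
  ring

theorem laplacian_diffused_density (d D : ℕ) (hd : 0 < d) (hdD : d < D)
    (ψ : EuclideanSpace ℝ (Fin d) → ℝ) (hcont : Continuous ψ)
    (hbdd : ∃ M, ∀ z, |ψ z| ≤ M) (t : ℝ) (ht : 0 < t)
    (x : EuclideanSpace ℝ (Fin d)) (y : EuclideanSpace ℝ (Fin (D - d))) :
    laplacian (fun x' => conv' ψ (gauss d t) x' * gauss (D - d) t y) x
      + laplacian (fun y' => conv' ψ (gauss d t) x * gauss (D - d) t y') y
    = (‖y‖ ^ 2 / t ^ 2 + ((d : ℝ) - D) / t) * (conv' ψ (gauss d t) x * gauss (D - d) t y)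
      + gauss (D - d) t y * laplacian (conv' ψ (gauss d t)) x :=
  laplacian_diffused_density_general d D hdD ψ t ht x y
end

section
/- If ψ : ℝ^d → ℝ is a bounded, twice continuously differentiable probability density with bounded first and second partial derivatives, then for any x with ψ(x) > 0, lim_{t→0⁺} t·Δ_x(ψ * φ_t^d)(x)/(ψ * φ_t^d)(x) = 0; hence lim_{t→0⁺} β_t(x) = d − D. -/
open MeasureTheory Real Filter Set Topology

/-!
After the substitution `y = x - √t • w`, `(ψ * φ_t)(x) = ∫ φ_1(w) ψ(x - √t • w) dw`.
Differentiating twice under this integral along a coordinate direction gives a `φ_1`-average of a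
second derivative of `ψ`, so `|Δ(ψ * φ_t)(x)| ≤ d · sup ‖D²ψ‖` uniformly in `t`, while
`(ψ * φ_t)(x) → ψ(x) > 0` by dominated convergence. Hence `t · Δ(ψ * φ_t)(x) → 0` and the
quotient tends to `0`.
-/

lemma gauss_nonneg (d : ℕ) {t : ℝ} (ht : 0 < t) (x : EuclideanSpace ℝ (Fin d)) :
    0 ≤ gauss d t x := by
  unfold gauss
  positivity

lemma integral_gauss (d : ℕ) {t : ℝ} (ht : 0 < t) : ∫ x, gauss d t x = 1 := by
  have h := GaussianFourier.integral_rexp_neg_mul_sq_norm (V := EuclideanSpace ℝ (Fin d))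
    (b := 1 / (2 * t)) (by positivity)
  have hexp : ∀ x : EuclideanSpace ℝ (Fin d), -‖x‖ ^ 2 / (2 * t) = -(1 / (2 * t)) * ‖x‖ ^ 2 :=
    fun x => by ring
  simp only [gauss, integral_const_mul, hexp, h, finrank_euclideanSpace_fin]
  rw [div_div_eq_mul_div, div_one, mul_left_comm, mul_assoc, ← Real.rpow_add (by positivity),
    neg_div, neg_add_cancel, Real.rpow_zero]

lemma integrable_gauss (d : ℕ) {t : ℝ} (ht : 0 < t) : Integrable (gauss d t) :=
  .of_integral_ne_zero (by simp [integral_gauss d ht])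

lemma sqrt_pow_mul_gauss_sqrt_smul (d : ℕ) {t : ℝ} (ht : 0 < t) (w : EuclideanSpace ℝ (Fin d)) :
    √t ^ d * gauss d t (√t • w) = gauss d 1 w := by
  have hnorm : ‖√t • w‖ ^ 2 = t * ‖w‖ ^ 2 := by
    rw [norm_smul, mul_pow, Real.norm_eq_abs, sq_abs, Real.sq_sqrt ht.le]
  have hexp : -(t * ‖w‖ ^ 2) / (2 * t) = -‖w‖ ^ 2 / (2 * 1) := by
    field_simp
  have hconst : √t ^ d * (2 * π * t) ^ (-(d : ℝ) / 2) = (2 * π * 1) ^ (-(d : ℝ) / 2) := by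
    rw [mul_one, Real.sqrt_eq_rpow, ← Real.rpow_natCast, ← Real.rpow_mul ht.le,
      Real.mul_rpow (by positivity) ht.le, mul_left_comm, ← Real.rpow_add ht]
    ring_nf
    simp
  rw [gauss, gauss, hnorm, hexp, ← mul_assoc, hconst]

lemma conv'_gauss_eq_integral {d : ℕ} (ψ : EuclideanSpace ℝ (Fin d) → ℝ) {t : ℝ} (ht : 0 < t)
    (x : EuclideanSpace ℝ (Fin d)) :
    conv' ψ (gauss d t) x = ∫ w, gauss d 1 w * ψ (x - √t • w) := by
  have hsym : conv' ψ (gauss d t) x = ∫ z, ψ (x - z) * gauss d t z := by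
    rw [conv', ← integral_sub_left_eq_self _ volume x]
    simp only [sub_sub_cancel]
  have hscale := Measure.integral_comp_smul_of_nonneg volume
    (fun z => ψ (x - z) * gauss d t z) √t (hR := Real.sqrt_nonneg t)
  rw [finrank_euclideanSpace_fin] at hscale
  have hs : √t ^ d ≠ 0 := by positivity
  rw [hsym, ← smul_inv_smul₀ hs (∫ z, _), ← hscale, ← integral_smul]
  congr 1 with w
  rw [smul_eq_mul, mul_left_comm, sqrt_pow_mul_gauss_sqrt_smul d ht, mul_comm]

lemma fderiv_fderiv_apply_eq_iteratedFDeriv_two {E : Type*} [NormedAddCommGroup E]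
    [NormedSpace ℝ E] {ψ : E → ℝ} (hψ : ContDiff ℝ 2 ψ) (v z : E) :
    fderiv ℝ (fun y => fderiv ℝ ψ y v) z v = iteratedFDeriv ℝ 2 ψ z ![v, v] := by
  rw [iteratedFDeriv_two_apply, fderiv_clm_apply
    ((hψ.fderiv_right le_rfl).differentiable one_ne_zero z) (differentiableAt_const v)]
  simp

lemma abs_iteratedFDeriv_two_apply_le {E : Type*} [NormedAddCommGroup E] [NormedSpace ℝ E]
    (ψ : E → ℝ) (v z : E) :
    |iteratedFDeriv ℝ 2 ψ z ![v, v]| ≤ ‖iteratedFDeriv ℝ 2 ψ z‖ * ‖v‖ ^ 2 := by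
  simpa [Fin.prod_univ_two, ← sq] using (iteratedFDeriv ℝ 2 ψ z).le_opNorm ![v, v]

section ParametricIntegrals

variable {E : Type*} [NormedAddCommGroup E] [NormedSpace ℝ E] [MeasurableSpace E]
  [OpensMeasurableSpace E] {μ : Measure E} {ρ : E → ℝ}

lemma tendsto_integral_mul_comp_sub_smul (hρ : Integrable ρ μ) {f : E → ℝ} (hf : Continuous f)
    {M : ℝ} (hM : ∀ z, |f z| ≤ M) (x : E) :
    Tendsto (fun c : ℝ => ∫ w, ρ w * f (x - c • w) ∂μ) (𝓝 0)
      (𝓝 ((∫ w, ρ w ∂μ) * f x)) := by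
  have hcont : Continuous fun c : ℝ => ∫ w, ρ w * f (x - c • w) ∂μ := by
    refine continuous_of_dominated (bound := fun w => ‖ρ w‖ * M)
      (fun c => hρ.aestronglyMeasurable.mul (by fun_prop : Continuous _).aestronglyMeasurable)
      (fun c => .of_forall fun w => ?_) (hρ.norm.mul_const M) (.of_forall fun w => by fun_prop)
    rw [norm_mul]
    exact mul_le_mul_of_nonneg_left (hM _) (norm_nonneg _)
  simpa [integral_mul_const] using hcont.tendsto 0

lemma hasDerivAt_integral_mul_comp_add_smul (hρ : Integrable ρ μ) {g : E → ℝ}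
    (hg : ContDiff ℝ 1 g) {v : E} {C K : ℝ} (hgC : ∀ z, |g z| ≤ C)
    (hgK : ∀ z, |fderiv ℝ g z v| ≤ K) {q : E → E} (hq : Continuous q) (s : ℝ) :
    HasDerivAt (fun s => ∫ w, ρ w * g (q w + s • v) ∂μ)
      (∫ w, ρ w * fderiv ℝ g (q w + s • v) v ∂μ) s := by
  have hline : ∀ s w, HasDerivAt (fun s : ℝ => g (q w + s • v)) (fderiv ℝ g (q w + s • v) v) s :=
    fun s w => ((hg.differentiable one_ne_zero _).hasFDerivAt).comp_hasDerivAt s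
      (((hasDerivAt_id s).smul_const v).const_add (q w) |>.congr_deriv (one_smul ℝ v))
  have hmeas : ∀ {h : E → ℝ}, Continuous h → AEStronglyMeasurable (fun w => ρ w * h w) μ :=
    fun hh => hρ.aestronglyMeasurable.mul hh.aestronglyMeasurable
  refine (hasDerivAt_integral_of_dominated_loc_of_deriv_le (bound := fun w => ‖ρ w‖ * K)
    (F := fun s w => ρ w * g (q w + s • v)) (F' := fun s w => ρ w * fderiv ℝ g (q w + s • v) v)
    Filter.univ_mem (.of_forall fun s => hmeas (by fun_prop))
    (hρ.mul_bdd (by fun_prop : Continuous fun w => g (q w + s • v)).aestronglyMeasurable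
      (.of_forall fun w => hgC _))
    (hmeas (by fun_prop)) (.of_forall fun w s _ => ?_) (hρ.norm.mul_const K)
    (.of_forall fun w s _ => (hline s w).const_mul (ρ w))).2
  rw [norm_mul]
  exact mul_le_mul_of_nonneg_left (hgK _) (norm_nonneg _)

lemma iteratedDeriv_two_integral_mul_comp_add_smul (hρ : Integrable ρ μ) {ψ : E → ℝ}
    (hψ : ContDiff ℝ 2 ψ) {M₀ M₁ M₂ : ℝ} (h₀ : ∀ z, |ψ z| ≤ M₀) (h₁ : ∀ z, ‖fderiv ℝ ψ z‖ ≤ M₁)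
    (h₂ : ∀ z, ‖iteratedFDeriv ℝ 2 ψ z‖ ≤ M₂) {q : E → E} (hq : Continuous q) (v : E) :
    iteratedDeriv 2 (fun s : ℝ => ∫ w, ρ w * ψ (q w + s • v) ∂μ) 0
      = ∫ w, ρ w * iteratedFDeriv ℝ 2 ψ (q w) ![v, v] ∂μ := by
  have habs₁ : ∀ z, |fderiv ℝ ψ z v| ≤ M₁ * ‖v‖ := fun z =>
    ((fderiv ℝ ψ z).le_opNorm v).trans (by gcongr; exact h₁ z)
  have habs₂ : ∀ z, |fderiv ℝ (fun y => fderiv ℝ ψ y v) z v| ≤ M₂ * ‖v‖ ^ 2 := fun z => by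
    rw [fderiv_fderiv_apply_eq_iteratedFDeriv_two hψ]
    exact (abs_iteratedFDeriv_two_apply_le ψ v z).trans (by gcongr; exact h₂ z)
  have hd₁ : ∀ s, HasDerivAt (fun s => ∫ w, ρ w * ψ (q w + s • v) ∂μ)
      (∫ w, ρ w * fderiv ℝ ψ (q w + s • v) v ∂μ) s :=
    hasDerivAt_integral_mul_comp_add_smul hρ (hψ.of_le one_le_two) h₀ habs₁ hq
  have hd₂ := hasDerivAt_integral_mul_comp_add_smul hρ
    ((hψ.fderiv_right le_rfl).clm_apply contDiff_const) habs₁ habs₂ hq 0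
  rw [iteratedDeriv_succ, iteratedDeriv_one, funext fun s => (hd₁ s).deriv, hd₂.deriv]
  simp only [zero_smul, add_zero, fderiv_fderiv_apply_eq_iteratedFDeriv_two hψ]

end ParametricIntegrals

lemma abs_laplacian_conv'_gauss_le {d : ℕ} {ψ : EuclideanSpace ℝ (Fin d) → ℝ}
    (hψ : ContDiff ℝ 2 ψ) {M₀ M₁ M₂ : ℝ} (h₀ : ∀ z, |ψ z| ≤ M₀) (h₁ : ∀ z, ‖fderiv ℝ ψ z‖ ≤ M₁)
    (h₂ : ∀ z, ‖iteratedFDeriv ℝ 2 ψ z‖ ≤ M₂) (x : EuclideanSpace ℝ (Fin d)) {t : ℝ}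
    (ht : 0 < t) :
    |laplacian (conv' ψ (gauss d t)) x| ≤ d * M₂ := by
  have hcoord : ∀ i : Fin d, |iteratedDeriv 2
      (fun s : ℝ => conv' ψ (gauss d t) (x + s • EuclideanSpace.single i 1)) 0| ≤ M₂ := by
    intro i
    set e : EuclideanSpace ℝ (Fin d) := EuclideanSpace.single i 1
    have hline : (fun s : ℝ => conv' ψ (gauss d t) (x + s • e))
        = fun s : ℝ => ∫ w, gauss d 1 w * ψ ((x - √t • w) + s • e) := by
      funext s
      simp only [conv'_gauss_eq_integral ψ ht, sub_add_eq_add_sub]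
    rw [hline, iteratedDeriv_two_integral_mul_comp_add_smul (integrable_gauss d one_pos) hψ h₀ h₁ h₂
      (by fun_prop)]
    calc ‖∫ w, gauss d 1 w * iteratedFDeriv ℝ 2 ψ (x - √t • w) ![e, e]‖
        ≤ ∫ w, gauss d 1 w * M₂ :=
          norm_integral_le_of_norm_le ((integrable_gauss d one_pos).mul_const M₂)
            (.of_forall fun w => ?_)
      _ = M₂ := by rw [integral_mul_const, integral_gauss d one_pos, one_mul]
    rw [norm_mul, Real.norm_of_nonneg (gauss_nonneg d one_pos w), Real.norm_eq_abs]
    refine mul_le_mul_of_nonneg_left ((abs_iteratedFDeriv_two_apply_le ψ e _).trans ?_)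
      (gauss_nonneg d one_pos w)
    simpa [e] using h₂ _
  calc |laplacian (conv' ψ (gauss d t)) x|
      ≤ ∑ i : Fin d, |iteratedDeriv 2
          (fun s : ℝ => conv' ψ (gauss d t) (x + s • EuclideanSpace.single i 1)) 0| :=
        Finset.abs_sum_le_sum_abs _ _
    _ ≤ ∑ _i : Fin d, M₂ := Finset.sum_le_sum fun i _ => hcoord i
    _ = d * M₂ := by simp

lemma tendsto_conv'_gauss {d : ℕ} {ψ : EuclideanSpace ℝ (Fin d) → ℝ} (hψ : Continuous ψ)
    {M : ℝ} (hM : ∀ z, |ψ z| ≤ M) (x : EuclideanSpace ℝ (Fin d)) :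
    Tendsto (fun t => conv' ψ (gauss d t) x) (𝓝[>] 0) (𝓝 (ψ x)) := by
  have hsqrt : Tendsto (fun t : ℝ => √t) (𝓝[>] 0) (𝓝 0) := by
    simpa using (Real.continuous_sqrt.tendsto 0).mono_left nhdsWithin_le_nhds
  have h := (tendsto_integral_mul_comp_sub_smul (integrable_gauss d one_pos) hψ hM x).comp hsqrt
  rw [integral_gauss d one_pos, one_mul] at h
  exact h.congr' (eventually_mem_nhdsWithin.mono fun t ht => (conv'_gauss_eq_integral ψ ht x).symm)

theorem beta_nice_density_general (d D : ℕ)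
    (ψ : EuclideanSpace ℝ (Fin d) → ℝ) (hsmooth : ContDiff ℝ 2 ψ)
    (hbdd : ∃ M, ∀ z, |ψ z| ≤ M ∧ ‖fderiv ℝ ψ z‖ ≤ M ∧ ‖iteratedFDeriv ℝ 2 ψ z‖ ≤ M)
    (x : EuclideanSpace ℝ (Fin d)) (hx : 0 < ψ x) :
    Filter.Tendsto
      (fun t => t * laplacian (conv' ψ (gauss d t)) x / conv' ψ (gauss d t) x)
      (nhdsWithin 0 (Set.Ioi 0)) (nhds 0) ∧
    Filter.Tendsto
      (fun t => (d : ℝ) - D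
        + t * laplacian (conv' ψ (gauss d t)) x / conv' ψ (gauss d t) x)
      (nhdsWithin 0 (Set.Ioi 0)) (nhds ((d : ℝ) - D)) := by
  obtain ⟨M, hM⟩ := hbdd
  have hden : Tendsto (fun t => conv' ψ (gauss d t) x) (𝓝[>] 0) (𝓝 (ψ x)) :=
    tendsto_conv'_gauss hsmooth.continuous (fun z => (hM z).1) x
  have hnum : Tendsto (fun t => t * laplacian (conv' ψ (gauss d t)) x) (𝓝[>] 0) (𝓝 0) :=
    (tendsto_nhdsWithin_of_tendsto_nhds tendsto_id).zero_mul_isBoundedUnder_le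
      ⟨d * M, eventually_mem_nhdsWithin.mono fun t ht =>
        abs_laplacian_conv'_gauss_le hsmooth (fun z => (hM z).1) (fun z => (hM z).2.1)
          (fun z => (hM z).2.2) x ht⟩
  have hratio := zero_div (ψ x) ▸ hnum.div hden hx.ne'
  exact ⟨hratio, by simpa using hratio.const_add ((d : ℝ) - D)⟩

theorem beta_nice_density (d D : ℕ) (hd : 0 < d) (hdD : d < D)
    (ψ : EuclideanSpace ℝ (Fin d) → ℝ) (hsmooth : ContDiff ℝ 2 ψ)
    (hbdd : ∃ M, ∀ z, |ψ z| ≤ M ∧ ‖fderiv ℝ ψ z‖ ≤ M ∧ ‖iteratedFDeriv ℝ 2 ψ z‖ ≤ M)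
    (hnn : ∀ z, 0 ≤ ψ z) (hint : ∫ z, ψ z = 1)
    (x : EuclideanSpace ℝ (Fin d)) (hx : 0 < ψ x) :
    Filter.Tendsto
      (fun t => t * laplacian (conv' ψ (gauss d t)) x / conv' ψ (gauss d t) x)
      (nhdsWithin 0 (Set.Ioi 0)) (nhds 0) ∧
    Filter.Tendsto
      (fun t => (d : ℝ) - D
        + t * laplacian (conv' ψ (gauss d t)) x / conv' ψ (gauss d t) x)
      (nhdsWithin 0 (Set.Ioi 0)) (nhds ((d : ℝ) - D)) :=
  beta_nice_density_general d D ψ hsmooth hbdd x hx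
end

section
/- Let p_S = Σ_k λ_k p_k be a convex combination of probability measures on ℝ^D with λ_k > 0, and ρ_t^k(x) = ∫ φ_t^D(x−y) dp_k(y). If p_i(B(x,R)) = 0 and p_j(B(x,r)) = C > 0 for some R > r > 0 and i ≠ j, then λ_i ρ_t^i(x)/ρ_t(x) ≤ λ_i / (λ_i + Cλ_j e^{(R²−r²)/(2t)}), where ρ_t = Σ_k λ_k ρ_t^k. Consequently, lim_{t→0⁺} λ_i ρ_t^i(x)/ρ_t(x) = 0. -/
/-!
Outside `B(x, R)` the kernel `φ_t(x - ·)` is at most `(2πt)^{-D/2} e^{-R²/(2t)}`, while on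
`B(x, r)` it is at least `(2πt)^{-D/2} e^{-r²/(2t)}`. Hence
`C e^{(R² - r²)/(2t)} ρ_t^i(x) ≤ ρ_t^j(x)`, and keeping only the `i`-th and `j`-th terms of `ρ_t`
gives the bound on the weight of `p_i`. The bound tends to `0` as `t → 0⁺` because `R² > r²`.
-/

open MeasureTheory Real Filter Set Topology

section Gauss

variable {n : ℕ} {t : ℝ}

lemma gauss_pos (ht : 0 < t) (u : EuclideanSpace ℝ (Fin n)) : 0 < gauss n t u := by
  unfold gauss
  positivity

lemma gauss_le_of_le_norm (ht : 0 < t) {R : ℝ} (hR : 0 ≤ R) {u : EuclideanSpace ℝ (Fin n)}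
    (hu : R ≤ ‖u‖) : gauss n t u ≤ (2 * π * t) ^ (-(n : ℝ) / 2) * exp (-R ^ 2 / (2 * t)) := by
  unfold gauss
  gcongr

lemma le_gauss_of_norm_le (ht : 0 < t) {r : ℝ} {u : EuclideanSpace ℝ (Fin n)} (hu : ‖u‖ ≤ r) :
    (2 * π * t) ^ (-(n : ℝ) / 2) * exp (-r ^ 2 / (2 * t)) ≤ gauss n t u := by
  unfold gauss
  gcongr

lemma integrable_gauss_sub {μ : Measure (EuclideanSpace ℝ (Fin n))} [IsFiniteMeasure μ]
    (ht : 0 < t) (x : EuclideanSpace ℝ (Fin n)) : Integrable (fun y => gauss n t (x - y)) μ := by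
  refine (integrable_const ((2 * π * t) ^ (-(n : ℝ) / 2) * exp (-0 ^ 2 / (2 * t)))).mono'
    (by unfold gauss; fun_prop) (ae_of_all _ fun y => ?_)
  rw [norm_of_nonneg (gauss_pos ht _).le]
  exact gauss_le_of_le_norm ht le_rfl (norm_nonneg _)

end Gauss

/-- The paper's `ρ_t(x)` for the measure `μ`. -/
noncomputable def heatDensity {n : ℕ} (μ : Measure (EuclideanSpace ℝ (Fin n))) (t : ℝ)
    (x : EuclideanSpace ℝ (Fin n)) : ℝ :=
  ∫ y, gauss n t (x - y) ∂μ

section HeatDensity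

variable {n : ℕ} {μ ν : Measure (EuclideanSpace ℝ (Fin n))} {t : ℝ} {x : EuclideanSpace ℝ (Fin n)}

lemma heatDensity_nonneg (ht : 0 < t) : 0 ≤ heatDensity μ t x :=
  integral_nonneg fun _ => (gauss_pos ht _).le

lemma heatDensity_le_of_measure_ball_eq_zero [IsFiniteMeasure μ] (ht : 0 < t) {R : ℝ}
    (hR : 0 ≤ R) (hμ : μ (Metric.ball x R) = 0) :
    heatDensity μ t x ≤ μ.real univ * ((2 * π * t) ^ (-(n : ℝ) / 2) * exp (-R ^ 2 / (2 * t))) := by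
  have hfar : ∀ᵐ y ∂μ, y ∉ Metric.ball x R := measure_eq_zero_iff_ae_notMem.mp hμ
  rw [← smul_eq_mul, ← integral_const]
  refine integral_mono_ae (integrable_gauss_sub ht x) (integrable_const _) ?_
  filter_upwards [hfar] with y hy
  rw [Metric.mem_ball, not_lt, dist_comm, dist_eq_norm] at hy
  exact gauss_le_of_le_norm ht hR hy

lemma measureReal_ball_mul_le_heatDensity [IsFiniteMeasure μ] (ht : 0 < t) (r : ℝ) :
    μ.real (Metric.ball x r) * ((2 * π * t) ^ (-(n : ℝ) / 2) * exp (-r ^ 2 / (2 * t)))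
      ≤ heatDensity μ t x := by
  rw [mul_comm]
  calc _ ≤ ∫ y in Metric.ball x r, gauss n t (x - y) ∂μ := by
        refine setIntegral_ge_of_const_le_real measurableSet_ball (measure_ne_top _ _)
          (fun y hy => le_gauss_of_norm_le ht ?_) (integrable_gauss_sub ht x).integrableOn
        rw [Metric.mem_ball, dist_comm, dist_eq_norm] at hy
        exact hy.le
    _ ≤ heatDensity μ t x := setIntegral_le_integral (integrable_gauss_sub ht x)
        (ae_of_all _ fun _ => (gauss_pos ht _).le)

lemma measureReal_ball_mul_exp_mul_heatDensity_le [IsProbabilityMeasure μ] [IsFiniteMeasure ν]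
    (ht : 0 < t) {R : ℝ} (hR : 0 ≤ R) (hμ : μ (Metric.ball x R) = 0) (r : ℝ) :
    ν.real (Metric.ball x r) * exp ((R ^ 2 - r ^ 2) / (2 * t)) * heatDensity μ t x
      ≤ heatDensity ν t x := by
  have hexp :
      exp ((R ^ 2 - r ^ 2) / (2 * t)) * exp (-R ^ 2 / (2 * t)) = exp (-r ^ 2 / (2 * t)) := by
    rw [← exp_add]
    ring_nf
  calc _ ≤ ν.real (Metric.ball x r) * exp ((R ^ 2 - r ^ 2) / (2 * t)) *
          ((2 * π * t) ^ (-(n : ℝ) / 2) * exp (-R ^ 2 / (2 * t))) := by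
        gcongr
        simpa using heatDensity_le_of_measure_ball_eq_zero ht hR hμ
    _ = ν.real (Metric.ball x r) * ((2 * π * t) ^ (-(n : ℝ) / 2) * exp (-r ^ 2 / (2 * t))) := by
        rw [← hexp]
        ring
    _ ≤ heatDensity ν t x := measureReal_ball_mul_le_heatDensity ht r

end HeatDensity

lemma mul_div_sum_mul_le {ι : Type*} [Fintype ι] {lam ρ : ι → ℝ} (hlam : ∀ k, 0 < lam k)
    (hρ : ∀ k, 0 ≤ ρ k) {i j : ι} (hij : i ≠ j) {K : ℝ} (hK : 0 ≤ K) (hKρ : K * ρ i ≤ ρ j) :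
    lam i * ρ i / ∑ k, lam k * ρ k ≤ lam i / (lam i + K * lam j) := by
  have hpair : lam i * ρ i + lam j * ρ j ≤ ∑ k, lam k * ρ k := by
    classical
    rw [← Finset.sum_pair (f := fun k => lam k * ρ k) hij]
    exact Finset.sum_le_sum_of_subset_of_nonneg (Finset.subset_univ _)
      fun k _ _ => mul_nonneg (hlam k).le (hρ k)
  have hden : 0 < lam i + K * lam j := by have := hlam i; have := hlam j; positivity
  rcases (Finset.sum_nonneg fun k _ => mul_nonneg (hlam k).le (hρ k)).eq_or_lt with hzero | hpos
  · rw [← hzero, div_zero]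
    exact div_nonneg (hlam i).le hden.le
  rw [div_le_div_iff₀ hpos hden]
  have := mul_le_mul_of_nonneg_left hKρ (mul_nonneg (hlam i).le (hlam j).le)
  nlinarith [mul_le_mul_of_nonneg_left hpair (hlam i).le]

lemma tendsto_div_add_mul_exp_div_nhdsGT_zero (a b : ℝ) {c d : ℝ} (hc : 0 < c) (hd : 0 < d) :
    Tendsto (fun t => a / (b + c * exp (d / t))) (𝓝[>] 0) (𝓝 0) := by
  refine tendsto_const_nhds.div_atTop (tendsto_atTop_add_const_left _ _ ?_)
  refine (Tendsto.const_mul_atTop hc (tendsto_exp_atTop.comp ?_))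
  exact (tendsto_inv_nhdsGT_zero.const_mul_atTop hd).congr fun t => (div_eq_mul_inv d t).symm

theorem far_component_weight_general (Dn n : ℕ)
    (p : Fin n → Measure (EuclideanSpace ℝ (Fin Dn)))
    (hp : ∀ k, IsProbabilityMeasure (p k)) (lam : Fin n → ℝ) (hlam : ∀ k, 0 < lam k)
    (x : EuclideanSpace ℝ (Fin Dn)) (i j : Fin n) (hij : i ≠ j)
    (R r : ℝ) (hr : 0 < r) (hRr : r < R) (C : ℝ) (hC : 0 < C)
    (hi : p i (Metric.ball x R) = 0) (hj : p j (Metric.ball x r) = ENNReal.ofReal C) :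
    (∀ t > (0 : ℝ),
      lam i * (∫ y, gauss Dn t (x - y) ∂(p i))
          / (∑ k, lam k * ∫ y, gauss Dn t (x - y) ∂(p k))
        ≤ lam i / (lam i + C * lam j * Real.exp ((R ^ 2 - r ^ 2) / (2 * t)))) ∧
    Filter.Tendsto
      (fun t => lam i * (∫ y, gauss Dn t (x - y) ∂(p i))
          / (∑ k, lam k * ∫ y, gauss Dn t (x - y) ∂(p k)))
      (nhdsWithin 0 (Set.Ioi 0)) (nhds 0) := by
  have hC' : (p j).real (Metric.ball x r) = C := by
    rw [measureReal_def, hj, ENNReal.toReal_ofReal hC.le]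
  have bound : ∀ t > (0 : ℝ), lam i * heatDensity (p i) t x / ∑ k, lam k * heatDensity (p k) t x
      ≤ lam i / (lam i + C * lam j * exp ((R ^ 2 - r ^ 2) / (2 * t))) := by
    intro t ht
    have hcomp := hC' ▸ measureReal_ball_mul_exp_mul_heatDensity_le (ν := p j) ht
      (hr.le.trans hRr.le) hi r
    rw [mul_right_comm C]
    exact mul_div_sum_mul_le hlam (fun _ => heatDensity_nonneg ht) hij (by positivity) hcomp
  refine ⟨bound, tendsto_of_tendsto_of_tendsto_of_le_of_le' tendsto_const_nhds ?_ ?_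
    (eventually_nhdsWithin_of_forall bound)⟩
  · have hd : 0 < (R ^ 2 - r ^ 2) / 2 := by nlinarith
    refine (tendsto_div_add_mul_exp_div_nhdsGT_zero (lam i) (lam i) (mul_pos hC (hlam j)) hd).congr
      fun t => ?_
    rw [div_div]
  · exact eventually_nhdsWithin_of_forall fun t ht =>
      div_nonneg (mul_nonneg (hlam i).le (heatDensity_nonneg ht))
        (Finset.sum_nonneg fun k _ => mul_nonneg (hlam k).le (heatDensity_nonneg ht))

theorem far_component_weight (Dn n : ℕ) (hD : 0 < Dn)
    (p : Fin n → Measure (EuclideanSpace ℝ (Fin Dn)))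
    (hp : ∀ k, IsProbabilityMeasure (p k)) (lam : Fin n → ℝ) (hlam : ∀ k, 0 < lam k)
    (hsum : ∑ k, lam k = 1) (x : EuclideanSpace ℝ (Fin Dn)) (i j : Fin n) (hij : i ≠ j)
    (R r : ℝ) (hr : 0 < r) (hRr : r < R) (C : ℝ) (hC : 0 < C)
    (hi : p i (Metric.ball x R) = 0) (hj : p j (Metric.ball x r) = ENNReal.ofReal C) :
    (∀ t > (0 : ℝ),
      lam i * (∫ y, gauss Dn t (x - y) ∂(p i))
          / (∑ k, lam k * ∫ y, gauss Dn t (x - y) ∂(p k))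
        ≤ lam i / (lam i + C * lam j * Real.exp ((R ^ 2 - r ^ 2) / (2 * t)))) ∧
    Filter.Tendsto
      (fun t => lam i * (∫ y, gauss Dn t (x - y) ∂(p i))
          / (∑ k, lam k * ∫ y, gauss Dn t (x - y) ∂(p k)))
      (nhdsWithin 0 (Set.Ioi 0)) (nhds 0) :=
  far_component_weight_general Dn n p hp lam hlam x i j hij R r hr hRr C hC hi hj
end
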